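/- Let G ∈ ℝ^(m×n) have full column rank with reduced SVD G = UΣVᵀ. Then (GGᵀ)^(-1/4) G (GᵀG)^(-1/4) = UVᵀ, where the inverse fourth roots are taken on the (pseudo-)inverses restricted to the column/row spaces of G. -/
import Mathlib

open Matrix

/-- For `G = U Σ Vᵀ` of full column rank, `(GGᵀ)^(-1/4) G (GᵀG)^(-1/4) = U Vᵀ`,
where the inverse fourth roots are taken via the spectral decompositions
`GGᵀ = U Σ² Uᵀ` and `GᵀG = V Σ² Vᵀ` on the column/row spaces of `G`, i.e.
`(GGᵀ)^(-1/4) = U Σ^(-1/2) Uᵀ` and `(GᵀG)^(-1/4) = V Σ^(-1/2) Vᵀ`. -/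
theorem stmt_6 (m n : ℕ) (U : Matrix (Fin m) (Fin n) ℝ) (V : Matrix (Fin n) (Fin n) ℝ)
    (σ : Fin n → ℝ) (hσ : ∀ i, 0 < σ i)
    (hU : Uᵀ * U = 1) (hV : Vᵀ * V = 1)
    (G : Matrix (Fin m) (Fin n) ℝ) (hG : G = U * Matrix.diagonal σ * Vᵀ) :
    (U * Matrix.diagonal (fun i => (σ i) ^ (-(1 / 2) : ℝ)) * Uᵀ) * G *
      (V * Matrix.diagonal (fun i => (σ i) ^ (-(1 / 2) : ℝ)) * Vᵀ) = U * Vᵀ := by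
  have hVVt : V * Vᵀ = 1 := (mul_eq_one_comm).mp hV
  have key : Matrix.diagonal (fun i => (σ i) ^ (-(1 / 2) : ℝ)) * Matrix.diagonal σ *
      Matrix.diagonal (fun i => (σ i) ^ (-(1 / 2) : ℝ)) = 1 := by
    rw [Matrix.diagonal_mul_diagonal, Matrix.diagonal_mul_diagonal]
    have he : (fun i => σ i ^ (-(1 / 2) : ℝ) * σ i * σ i ^ (-(1 / 2) : ℝ)) =
        fun _ => (1 : ℝ) := by
      funext i
      have h1 : σ i ^ (-(1 / 2) : ℝ) * σ i ^ (-(1 / 2) : ℝ) = (σ i)⁻¹ := by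
        rw [← Real.rpow_add (hσ i)]
        norm_num
        rw [Real.rpow_neg_one]
      rw [mul_right_comm, h1, inv_mul_cancel₀ (hσ i).ne']
    rw [he, Matrix.diagonal_one]
  calc (U * Matrix.diagonal (fun i => (σ i) ^ (-(1 / 2) : ℝ)) * Uᵀ) * G *
      (V * Matrix.diagonal (fun i => (σ i) ^ (-(1 / 2) : ℝ)) * Vᵀ)
      = U * (Matrix.diagonal (fun i => (σ i) ^ (-(1 / 2) : ℝ)) * (Uᵀ * U) * Matrix.diagonal σ *
        (Vᵀ * V) * Matrix.diagonal (fun i => (σ i) ^ (-(1 / 2) : ℝ))) * Vᵀ := by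
        rw [hG]; ring_nf; simp [Matrix.mul_assoc]
    _ = U * Vᵀ := by rw [hU, hV, Matrix.mul_one, Matrix.mul_one, key, Matrix.mul_one]
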